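/- Let k ∈ ℕ. The operator √(−1)·∂/∂x_k, defined on the set H¹_k(ℝ^∞) of u ∈ CM(ℝ^∞) for which the strong limit v = lim_{h↓0} (τ_{h e_k} u − u)/h exists in CM(ℝ^∞) (with ∂u/∂x_k := −v), is a self-adjoint operator in the Hilbert space L²_k(ℝ^∞). -/

import Mathlib

open MeasureTheory Complex Filter Topology

noncomputable def sqDen {Ω : Type*} [MeasurableSpace Ω] (μ : Measure Ω) (f : Ω → ℂ) :
    ComplexMeasure Ω :=
  μ.withDensityᵥ (fun x => f x * ((‖f x‖ : ℝ) : ℂ))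

structure CMSpace (Ω : Type*) [MeasurableSpace Ω] where
  add : ComplexMeasure Ω → ComplexMeasure Ω → ComplexMeasure Ω
  smul : ℂ → ComplexMeasure Ω → ComplexMeasure Ω
  inner : ComplexMeasure Ω → ComplexMeasure Ω → ℂ
  add_repr : ∀ (μ : Measure Ω), SigmaFinite μ → ∀ f g : Ω → ℂ,
      MemLp f 2 μ → MemLp g 2 μ →
      add (sqDen μ f) (sqDen μ g) = sqDen μ (f + g)
  smul_repr : ∀ (μ : Measure Ω), SigmaFinite μ → ∀ (c : ℂ) (f : Ω → ℂ),
      MemLp f 2 μ → smul c (sqDen μ f) = sqDen μ (c • f)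
  inner_repr : ∀ (μ : Measure Ω), SigmaFinite μ → ∀ f g : Ω → ℂ,
      MemLp f 2 μ → MemLp g 2 μ →
      inner (sqDen μ f) (sqDen μ g) = ∫ x, f x * (starRingEnd ℂ) (g x) ∂μ
  add_assoc : ∀ u v w, add (add u v) w = add u (add v w)
  add_comm : ∀ u v, add u v = add v u
  add_zero : ∀ u, add u 0 = u
  neg_add : ∀ u, add (smul (-1) u) u = 0
  one_smul : ∀ u, smul 1 u = u
  mul_smul : ∀ c d u, smul (c * d) u = smul c (smul d u)
  smul_add : ∀ c u v, smul c (add u v) = add (smul c u) (smul c v)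
  add_smul : ∀ c d u, smul (c + d) u = add (smul c u) (smul d u)
  inner_conj_symm : ∀ u v, (starRingEnd ℂ) (inner u v) = inner v u
  inner_add_left : ∀ u v w, inner (add u v) w = inner u w + inner v w
  inner_smul_left : ∀ c u v, inner (smul c u) v = (starRingEnd ℂ) c * inner u v
  inner_self_nonneg : ∀ u, 0 ≤ (inner u u).re ∧ (inner u u).im = 0
  inner_self_eq_zero : ∀ u, inner u u = 0 → u = 0
  complete : ∀ u : ℕ → ComplexMeasure Ω,
    (∀ ε > 0, ∃ N, ∀ m ≥ N, ∀ n ≥ N,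
      Real.sqrt (inner (add (u m) (smul (-1) (u n))) (add (u m) (smul (-1) (u n)))).re < ε) →
    ∃ v, Tendsto
      (fun n => Real.sqrt (inner (add (u n) (smul (-1) v)) (add (u n) (smul (-1) v))).re)
      atTop (nhds 0)

noncomputable def CMSpace.nrm {Ω : Type*} [MeasurableSpace Ω] (C : CMSpace Ω)
    (u : ComplexMeasure Ω) : ℝ := Real.sqrt (C.inner u u).re

noncomputable def CMSpace.sub {Ω : Type*} [MeasurableSpace Ω] (C : CMSpace Ω)
    (u v : ComplexMeasure Ω) : ComplexMeasure Ω := C.add u (C.smul (-1) v)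


namespace CMRep

variable {Ω : Type*} [MeasurableSpace Ω]

/-- A dominating finite measure for a complex measure. -/
noncomputable def cmVar (T : ComplexMeasure Ω) : Measure Ω :=
  T.re.totalVariation + T.im.totalVariation

instance (T : ComplexMeasure Ω) : IsFiniteMeasure (cmVar T) := by
  unfold cmVar SignedMeasure.totalVariation; infer_instance

lemma cmVar_ac (T : ComplexMeasure Ω) {μ : Measure Ω} (h : cmVar T ≤ μ) :
    T.re ≪ᵥ μ.toENNRealVectorMeasure ∧ T.im ≪ᵥ μ.toENNRealVectorMeasure := by
  constructor
  · rw [SignedMeasure.absolutelyContinuous_ennreal_iff,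
      VectorMeasure.ennrealToMeasure_toENNRealVectorMeasure]
    exact (Measure.absolutelyContinuous_of_le
      (le_trans (Measure.le_add_right le_rfl) h))
  · rw [SignedMeasure.absolutelyContinuous_ennreal_iff,
      VectorMeasure.ennrealToMeasure_toENNRealVectorMeasure]
    exact (Measure.absolutelyContinuous_of_le
      (le_trans (Measure.le_add_left le_rfl) h))

/-- A complex measure dominated by μ equals a density. -/
lemma eq_withDensityᵥ (T : ComplexMeasure Ω) {μ : Measure Ω} [IsFiniteMeasure μ]
    (h : cmVar T ≤ μ) :
    ∃ g : Ω → ℂ, Measurable g ∧ Integrable g μ ∧ T = μ.withDensityᵥ g := by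
  obtain ⟨hre, him⟩ := cmVar_ac T h
  set a := T.re.rnDeriv μ
  set b := T.im.rnDeriv μ
  have ha : Measurable a := SignedMeasure.measurable_rnDeriv _ _
  have hb : Measurable b := SignedMeasure.measurable_rnDeriv _ _
  have hai : Integrable a μ := SignedMeasure.integrable_rnDeriv _ _
  have hbi : Integrable b μ := SignedMeasure.integrable_rnDeriv _ _
  have hrd : μ.withDensityᵥ a = T.re := SignedMeasure.withDensityᵥ_rnDeriv_eq _ _ hre
  have hid : μ.withDensityᵥ b = T.im := SignedMeasure.withDensityᵥ_rnDeriv_eq _ _ him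
  refine ⟨fun x => ⟨a x, b x⟩, ?_, ?_, ?_⟩
  · have : (fun x => (⟨a x, b x⟩ : ℂ)) = fun x => (a x : ℂ) + (b x : ℂ) * I := by
      funext x; apply Complex.ext <;> simp
    rw [this]
    exact (Complex.measurable_ofReal.comp ha).add
      ((Complex.measurable_ofReal.comp hb).mul_const I)
  · have : (fun x => (⟨a x, b x⟩ : ℂ)) = fun x => (a x : ℂ) + (b x : ℂ) * I := by
      funext x; apply Complex.ext <;> simp
    rw [this]
    exact (hai.ofReal).add ((hbi.ofReal).mul_const I)
  · have hgi : Integrable (fun x => (⟨a x, b x⟩ : ℂ)) μ := by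
      have : (fun x => (⟨a x, b x⟩ : ℂ)) = fun x => (a x : ℂ) + (b x : ℂ) * I := by
        funext x; apply Complex.ext <;> simp
      rw [this]
      exact (hai.ofReal).add ((hbi.ofReal).mul_const I)
    ext s hs
    rw [withDensityᵥ_apply hgi hs]
    have h1 : T.re s = ∫ x in s, a x ∂μ := by
      rw [← hrd, withDensityᵥ_apply hai hs]
    have h2 : T.im s = ∫ x in s, b x ∂μ := by
      rw [← hid, withDensityᵥ_apply hbi hs]
    apply Complex.ext
    · rw [← RCLike.re_eq_complex_re, ← integral_re hgi.integrableOn,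
        RCLike.re_eq_complex_re]
      simp; exact h1
    · rw [← RCLike.im_eq_complex_im, ← integral_im hgi.integrableOn,
        RCLike.im_eq_complex_im]
      simp; exact h2

/-- From density to sqDen form. -/
lemma withDensityᵥ_eq_sqDen {μ : Measure Ω} [IsFiniteMeasure μ] {g : Ω → ℂ}
    (hg : Measurable g) (hgi : Integrable g μ) :
    ∃ f : Ω → ℂ, MemLp f 2 μ ∧ μ.withDensityᵥ g = sqDen μ f := by
  set f : Ω → ℂ := fun x => ((Real.sqrt (‖g x‖))⁻¹ : ℝ) • g x with hf
  have hfm : Measurable f := by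
    apply Measurable.fun_smul _ hg
    exact (Real.continuous_sqrt.measurable.comp (continuous_norm.measurable.comp hg)).inv
  have habs : ∀ x, ‖f x‖ = Real.sqrt (‖g x‖) := by
    intro x
    by_cases hx : g x = 0
    · simp [hf, hx]
    · have hpos : 0 < ‖g x‖ := by simpa [norm_pos_iff] using hx
      have hsq : 0 < Real.sqrt (‖g x‖) := Real.sqrt_pos.2 hpos
      have : ‖f x‖ = ‖f x‖ := rfl
      rw [this, hf]
      simp only [norm_smul, Real.norm_eq_abs]
      rw [_root_.abs_of_nonneg (inv_nonneg.2 hsq.le),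
        inv_mul_eq_iff_eq_mul₀ hsq.ne', Real.mul_self_sqrt hpos.le]
  have hfabs : ∀ x, f x * (‖f x‖ : ℂ) = g x := by
    intro x
    by_cases hx : g x = 0
    · simp [hf, hx]
    · have hpos : 0 < ‖g x‖ := by simpa [norm_pos_iff] using hx
      have hsq : 0 < Real.sqrt (‖g x‖) := Real.sqrt_pos.2 hpos
      rw [habs x, hf]
      simp only [Complex.real_smul]
      push_cast
      rw [mul_comm ((Real.sqrt (‖g x‖) : ℂ))⁻¹ (g x), mul_assoc,
        inv_mul_cancel₀ (by exact_mod_cast hsq.ne'), mul_one]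
  refine ⟨f, ?_, ?_⟩
  · rw [memLp_two_iff_integrable_sq_norm hfm.aestronglyMeasurable]
    have : (fun x => ‖f x‖ ^ 2) = fun x => ‖g x‖ := by
      funext x
      rw [show ‖f x‖ = ‖f x‖ from rfl, habs x, Real.sq_sqrt (norm_nonneg _)]
    rw [this]
    simpa using hgi.norm
  · unfold sqDen
    congr 1
    funext x
    rw [hfabs x]

/-- Common representation of two complex measures. -/
lemma exists_common_rep (T S : ComplexMeasure Ω) :
    ∃ (μ : Measure Ω) (_ : IsFiniteMeasure μ) (f g : Ω → ℂ),
      MemLp f 2 μ ∧ MemLp g 2 μ ∧ T = sqDen μ f ∧ S = sqDen μ g := by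
  set μ : Measure Ω := cmVar T + cmVar S with hμ
  have : IsFiniteMeasure μ := by rw [hμ]; infer_instance
  obtain ⟨gT, hgTm, hgTi, hT⟩ := eq_withDensityᵥ T (μ := μ) (Measure.le_add_right le_rfl)
  obtain ⟨gS, hgSm, hgSi, hS⟩ := eq_withDensityᵥ S (μ := μ) (Measure.le_add_left le_rfl)
  obtain ⟨f, hf2, hfe⟩ := withDensityᵥ_eq_sqDen hgTm hgTi
  obtain ⟨g, hg2, hge⟩ := withDensityᵥ_eq_sqDen hgSm hgSi
  exact ⟨μ, this, f, g, hf2, hg2, by rw [hT, hfe], by rw [hS, hge]⟩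

end CMRep


/-! ### Stage 1: Hilbert space structure -/

variable {Ω : Type*} [MeasurableSpace Ω]

/-- Type synonym carrying the Hilbert space structure of `C`. -/
def HS (C : CMSpace Ω) := ComplexMeasure Ω

namespace HS

variable {C : CMSpace Ω}

noncomputable instance : Add (HS C) := ⟨C.add⟩
noncomputable instance : Zero (HS C) := ⟨(0 : ComplexMeasure Ω)⟩
noncomputable instance : Neg (HS C) := ⟨fun u => C.smul (-1) u⟩
noncomputable instance : Sub (HS C) := ⟨fun u v => C.add u (C.smul (-1) v)⟩
noncomputable instance : SMul ℂ (HS C) := ⟨C.smul⟩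

noncomputable instance : AddCommGroup (HS C) where
  add u v := u + v
  zero := (0 : HS C)
  neg u := -u
  sub u v := u - v
  add_assoc := C.add_assoc
  add_comm := C.add_comm
  add_zero := C.add_zero
  zero_add u := (C.add_comm 0 u).trans (C.add_zero u)
  neg_add_cancel := C.neg_add
  sub_eq_add_neg _ _ := rfl
  nsmul := nsmulRec
  zsmul := zsmulRec
  nsmul_zero _ := rfl
  nsmul_succ _ _ := rfl
  zsmul_zero' _ := rfl
  zsmul_succ' _ _ := rfl
  zsmul_neg' _ _ := rfl

lemma add_def (u v : HS C) : u + v = C.add u v := rfl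

lemma eq_zero_of_add_self (a : HS C) (h : C.add a a = a) : a = 0 := by
  have h' : a + a = a + 0 := by rw [add_def, h, add_zero]
  have h'' := congrArg (fun x => -a + x) h'
  simpa only [neg_add_cancel_left] using h''
lemma sub_def (u v : HS C) : u - v = C.sub u v := rfl
lemma zero_def : (0 : HS C) = (0 : ComplexMeasure Ω) := rfl

noncomputable instance : Module ℂ (HS C) where
  smul c u := c • u
  one_smul := C.one_smul
  mul_smul := C.mul_smul
  smul_add := C.smul_add
  add_smul := C.add_smul
  smul_zero c := eq_zero_of_add_self _ (by show C.add (C.smul c 0) (C.smul c 0) = C.smul c 0; rw [← C.smul_add, C.add_zero])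
  zero_smul u := eq_zero_of_add_self _ (by show C.add (C.smul 0 u) (C.smul 0 u) = C.smul 0 u; exact ((C.add_smul 0 0 u).symm.trans (congrArg (fun c : ℂ => C.smul c u) (add_zero (0:ℂ)))))

lemma smul_def (c : ℂ) (u : HS C) : c • u = C.smul c u := rfl

noncomputable instance : Inner ℂ (HS C) := ⟨C.inner⟩

lemma inner_def (u v : HS C) : (inner ℂ u v : ℂ) = C.inner u v := rfl

noncomputable def core : InnerProductSpace.Core ℂ (HS C) where
  conj_inner_symm u v := C.inner_conj_symm v u
  re_inner_nonneg u := (C.inner_self_nonneg u).1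
  add_left := C.inner_add_left
  smul_left := fun x y r => C.inner_smul_left r x y
  definite := C.inner_self_eq_zero

noncomputable instance : NormedAddCommGroup (HS C) :=
  @InnerProductSpace.Core.toNormedAddCommGroup ℂ (HS C) _ _ _ core

noncomputable instance : InnerProductSpace ℂ (HS C) := InnerProductSpace.ofCore core.toCore

lemma norm_def (u : HS C) : ‖u‖ = C.nrm u := rfl

instance : CompleteSpace (HS C) := by
  apply Metric.complete_of_cauchySeq_tendsto
  intro u hu
  rw [Metric.cauchySeq_iff] at hu
  obtain ⟨v, hv⟩ := C.complete u (fun ε hε => by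
    obtain ⟨N, hN⟩ := hu ε hε
    exact ⟨N, fun m hm n hn => by
      have := hN m hm n hn
      rwa [dist_eq_norm] at this⟩)
  refine ⟨v, ?_⟩
  apply tendsto_iff_dist_tendsto_zero.mpr
  convert hv using 1
  funext n; exact (dist_eq_norm (E := HS C) (u n) v).trans rfl

end HS

noncomputable def cmTranslate (a : ℕ → ℝ) (T : ComplexMeasure (ℕ → ℝ)) :
    ComplexMeasure (ℕ → ℝ) :=
  T.map (fun x => x + a)

noncomputable def ek (k : ℕ) : ℕ → ℝ := fun n => if n = k then 1 else 0


/-! ### Stage 3: translation -/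
namespace CMTrans

open CMRep

/-- Translation as a measurable equivalence. -/
def shiftEquiv (a : ℕ → ℝ) : (ℕ → ℝ) ≃ᵐ (ℕ → ℝ) where
  toFun x := x + a
  invFun x := x - a
  left_inv x := by simp
  right_inv x := by simp
  measurable_toFun := by
    show Measurable (fun x : ℕ → ℝ => x + a); exact measurable_id.add_const a
  measurable_invFun := by
    show Measurable (fun x : ℕ → ℝ => x - a); exact measurable_id.sub_const a

lemma shiftEquiv_coe (a : ℕ → ℝ) : (shiftEquiv a : (ℕ → ℝ) → (ℕ → ℝ)) = fun x => x + a := rfl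

lemma shiftEquiv_symm_coe (a : ℕ → ℝ) :
    ((shiftEquiv a).symm : (ℕ → ℝ) → (ℕ → ℝ)) = fun x => x - a := rfl

lemma sqDen_density_integrable {Ω : Type*} [MeasurableSpace Ω] {μ : Measure Ω} {f : Ω → ℂ}
    (hf : MemLp f 2 μ) : Integrable (fun x => f x * (‖f x‖ : ℂ)) μ := by
  have hsm : AEStronglyMeasurable (fun x => f x * (‖f x‖ : ℂ)) μ := by
    exact hf.aestronglyMeasurable.mul
      (Complex.continuous_ofReal.comp_aestronglyMeasurable
        (continuous_norm.comp_aestronglyMeasurable hf.aestronglyMeasurable))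
  have hint : Integrable (fun x => ‖f x‖ ^ 2) μ :=
    (memLp_two_iff_integrable_sq_norm hf.aestronglyMeasurable).1 hf
  refine hint.mono' hsm ?_
  filter_upwards with x
  simp only [norm_mul, Complex.norm_real, Real.norm_eq_abs,
    _root_.abs_of_nonneg (norm_nonneg (f x))]
  rw [sq]

lemma memLp_shift {μ : Measure (ℕ → ℝ)} {f : (ℕ → ℝ) → ℂ} (a : ℕ → ℝ) (hf : MemLp f 2 μ) :
    MemLp (fun x => f (x - a)) 2 (μ.map (fun x => x + a)) := by
  have : (fun x => f (x - a)) ∘ (shiftEquiv a) = f := by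
    funext x; simp [shiftEquiv]
  rw [show (fun x : ℕ → ℝ => x + a) = (shiftEquiv a : (ℕ → ℝ) → (ℕ → ℝ)) from rfl,
    MeasurableEquiv.memLp_map_measure_iff, this]
  exact hf

lemma cmTranslate_sqDen (a : ℕ → ℝ) (μ : Measure (ℕ → ℝ)) [IsFiniteMeasure μ]
    (f : (ℕ → ℝ) → ℂ) (hf : MemLp f 2 μ) :
    cmTranslate a (sqDen μ f) = sqDen (μ.map (fun x => x + a)) (fun x => f (x - a)) := by
  have hfi := sqDen_density_integrable hf
  have hfi' := sqDen_density_integrable (memLp_shift a hf)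
  ext s hs
  rw [sqDen, sqDen, withDensityᵥ_apply hfi' hs, cmTranslate,
    show (fun x : ℕ → ℝ => x + a) = (shiftEquiv a : (ℕ → ℝ) → (ℕ → ℝ)) from rfl,
    VectorMeasure.map_apply _ (shiftEquiv a).measurable hs,
    withDensityᵥ_apply hfi ((shiftEquiv a).measurable hs),
    MeasurableEmbedding.setIntegral_map (shiftEquiv a).measurableEmbedding]
  congr 1
  funext x
  simp [shiftEquiv]

variable (C : CMSpace (ℕ → ℝ))

lemma cmTranslate_add (a : ℕ → ℝ) (T S : ComplexMeasure (ℕ → ℝ)) :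
    cmTranslate a (C.add T S) = C.add (cmTranslate a T) (cmTranslate a S) := by
  obtain ⟨μ, hfin, f, g, hf, hg, hT, hS⟩ := exists_common_rep T S
  have : IsFiniteMeasure (μ.map (fun x => x + a)) :=
    Measure.isFiniteMeasure_map μ _
  rw [hT, hS, C.add_repr μ inferInstance f g hf hg,
    cmTranslate_sqDen a μ _ (hf.add hg), cmTranslate_sqDen a μ f hf,
    cmTranslate_sqDen a μ g hg,
    C.add_repr _ inferInstance _ _ (memLp_shift a hf) (memLp_shift a hg)]
  congr 1

lemma cmTranslate_smul (a : ℕ → ℝ) (c : ℂ) (T : ComplexMeasure (ℕ → ℝ)) :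
    cmTranslate a (C.smul c T) = C.smul c (cmTranslate a T) := by
  obtain ⟨μ, hfin, f, g, hf, hg, hT, hS⟩ := exists_common_rep T T
  have : IsFiniteMeasure (μ.map (fun x => x + a)) :=
    Measure.isFiniteMeasure_map μ _
  rw [hT, C.smul_repr μ inferInstance c f hf,
    cmTranslate_sqDen a μ _ (hf.const_smul c), cmTranslate_sqDen a μ f hf,
    C.smul_repr _ inferInstance c _ (memLp_shift a hf)]
  congr 1

lemma cmTranslate_inner (a : ℕ → ℝ) (T S : ComplexMeasure (ℕ → ℝ)) :
    C.inner (cmTranslate a T) (cmTranslate a S) = C.inner T S := by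
  obtain ⟨μ, hfin, f, g, hf, hg, hT, hS⟩ := exists_common_rep T S
  have : IsFiniteMeasure (μ.map (fun x => x + a)) :=
    Measure.isFiniteMeasure_map μ _
  rw [hT, hS, cmTranslate_sqDen a μ f hf, cmTranslate_sqDen a μ g hg,
    C.inner_repr _ inferInstance _ _ (memLp_shift a hf) (memLp_shift a hg),
    C.inner_repr μ inferInstance f g hf hg,
    show (fun x : ℕ → ℝ => x + a) = (shiftEquiv a : (ℕ → ℝ) → (ℕ → ℝ)) from rfl,
    integral_map_equiv]
  congr 1
  funext x
  simp [shiftEquiv]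

lemma cmTranslate_comp (a b : ℕ → ℝ) (T : ComplexMeasure (ℕ → ℝ)) :
    cmTranslate b (cmTranslate a T) = cmTranslate (a + b) T := by
  ext s hs
  rw [cmTranslate, cmTranslate, cmTranslate,
    show (fun x : ℕ → ℝ => x + a) = (shiftEquiv a : (ℕ → ℝ) → (ℕ → ℝ)) from rfl,
    show (fun x : ℕ → ℝ => x + b) = (shiftEquiv b : (ℕ → ℝ) → (ℕ → ℝ)) from rfl,
    show (fun x : ℕ → ℝ => x + (a + b)) = (shiftEquiv (a + b) : (ℕ → ℝ) → (ℕ → ℝ)) from rfl,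
    VectorMeasure.map_apply _ (shiftEquiv b).measurable hs,
    VectorMeasure.map_apply _ (shiftEquiv a).measurable ((shiftEquiv b).measurable hs),
    VectorMeasure.map_apply _ (shiftEquiv (a + b)).measurable hs]
  congr 1
  ext x
  simp [shiftEquiv, Set.mem_preimage, add_assoc]

lemma cmTranslate_zero' (T : ComplexMeasure (ℕ → ℝ)) : cmTranslate 0 T = T := by
  rw [cmTranslate, show (fun x : ℕ → ℝ => x + 0) = id from by funext x; simp,
    VectorMeasure.map_id]

end CMTrans

/-- u ∈ L²_k(ℝ^∞). -/
def InL2k (C : CMSpace (ℕ → ℝ)) (k : ℕ) (u : ComplexMeasure (ℕ → ℝ)) : Prop :=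
  Filter.Tendsto (fun h : ℝ => C.nrm (C.sub (cmTranslate (h • ek k) u) u))
    (nhdsWithin 0 (Set.Ioi 0)) (nhds 0)

/-- `HasQuotK C k u v`: the difference quotients (τ_{h e_k} u − u)/h converge to v in
CM-norm as h ↓ 0; then u ∈ H¹_k(ℝ^∞) and ∂u/∂x_k = −v. -/
def HasQuotK (C : CMSpace (ℕ → ℝ)) (k : ℕ) (u v : ComplexMeasure (ℕ → ℝ)) : Prop :=
  Filter.Tendsto
    (fun h : ℝ =>
      C.nrm (C.sub (C.smul ((h : ℂ))⁻¹ (C.sub (cmTranslate (h • ek k) u) u)) v))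
    (nhdsWithin 0 (Set.Ioi 0)) (nhds 0)

noncomputable section UnitaryGroupAbstract

variable {E : Type*} [NormedAddCommGroup E] [InnerProductSpace ℂ E] [CompleteSpace E]

/-- A one-parameter group of unitaries (as bare functions). -/
structure UGroup (U : ℝ → E → E) : Prop where
  addm : ∀ (t : ℝ) (x y : E), U t (x + y) = U t x + U t y
  smulm : ∀ (t : ℝ) (c : ℂ) (x : E), U t (c • x) = c • U t x
  innerm : ∀ (t : ℝ) (x y : E), (inner ℂ (U t x) (U t y) : ℂ) = inner ℂ x y
  compm : ∀ (s t : ℝ) (x : E), U s (U t x) = U (s + t) x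
  zerom : ∀ x : E, U 0 x = x

/-- Strong right-continuity at `0`. -/
def SCa (U : ℝ → E → E) (x : E) : Prop :=
  Tendsto (fun h : ℝ => U h x) (nhdsWithin 0 (Set.Ioi 0)) (nhds x)

/-- Right difference quotients converge to `v`. -/
def HQa (U : ℝ → E → E) (x v : E) : Prop :=
  Tendsto (fun h : ℝ => ((h : ℂ))⁻¹ • (U h x - x)) (nhdsWithin 0 (Set.Ioi 0)) (nhds v)

set_option linter.unusedSectionVars false

namespace UGroup

variable {U : ℝ → E → E} (hU : UGroup U)
include hU

lemma map_zero_vec (t : ℝ) : U t (0 : E) = 0 := by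
  have h := hU.addm t 0 0
  rw [add_zero] at h
  exact (left_eq_add.mp h)

lemma map_neg (t : ℝ) (x : E) : U t (-x) = -U t x := by
  rw [← neg_one_smul ℂ x, hU.smulm, neg_one_smul ℂ]

lemma map_sub (t : ℝ) (x y : E) : U t (x - y) = U t x - U t y := by
  rw [sub_eq_add_neg, hU.addm, hU.map_neg, ← sub_eq_add_neg]

lemma norm_map (t : ℝ) (x : E) : ‖U t x‖ = ‖x‖ := by
  rw [@norm_eq_sqrt_re_inner ℂ, @norm_eq_sqrt_re_inner ℂ E _ _ _ x, hU.innerm]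

lemma inv_cancel (t : ℝ) (x : E) : U (-t) (U t x) = x := by
  rw [hU.compm, neg_add_cancel, hU.zerom]

lemma inv_cancel' (t : ℝ) (x : E) : U t (U (-t) x) = x := by
  rw [hU.compm, add_neg_cancel, hU.zerom]

/-- `U t` as a continuous linear map. -/
def clm (hU : UGroup U) (t : ℝ) : E →L[ℂ] E :=
  LinearMap.mkContinuous
    { toFun := U t, map_add' := hU.addm t, map_smul' := hU.smulm t } 1
    (fun x => by simp [hU.norm_map])

@[simp] lemma clm_apply (t : ℝ) (x : E) : hU.clm t x = U t x := rfl

/-- Right continuity upgrades to two-sided continuity at `0`. -/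
lemma tendsto_nhds_zero {x : E} (hx : SCa U x) :
    Tendsto (fun h : ℝ => U h x) (nhds 0) (nhds x) := by
  have h1 : Tendsto (fun h : ℝ => U h x) (nhdsWithin 0 (Set.Iio 0)) (nhds x) := by
    have hneg : Tendsto (fun h : ℝ => -h) (nhdsWithin 0 (Set.Iio 0))
        (nhdsWithin 0 (Set.Ioi 0)) := by
      apply tendsto_nhdsWithin_of_tendsto_nhds_of_eventually_within
      · simpa using (continuous_neg.tendsto (0:ℝ)).mono_left nhdsWithin_le_nhds
      · filter_upwards [self_mem_nhdsWithin] with h hh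
        exact Set.mem_Ioi.2 (by simpa using hh)
    have h2 : Tendsto (fun η : ℝ => U (-η) x) (nhdsWithin 0 (Set.Ioi 0)) (nhds x) := by
      rw [tendsto_iff_norm_sub_tendsto_zero]
      have heq : ∀ η : ℝ, ‖U (-η) x - x‖ = ‖U η x - x‖ := by
        intro η
        calc ‖U (-η) x - x‖ = ‖U (-η) x - U (-η) (U η x)‖ := by rw [hU.inv_cancel]
        _ = ‖U (-η) (x - U η x)‖ := by rw [hU.map_sub]
        _ = ‖x - U η x‖ := hU.norm_map _ _
        _ = ‖U η x - x‖ := norm_sub_rev _ _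
      simp only [heq]
      rw [← tendsto_iff_norm_sub_tendsto_zero]
      exact hx
    have := h2.comp hneg
    simpa [Function.comp_def] using this
  have h3 : Tendsto (fun h : ℝ => U h x) (pure (0:ℝ)) (nhds x) := by
    have : U 0 x = x := hU.zerom x
    simpa [this] using (tendsto_pure_nhds (fun h : ℝ => U h x) 0)
  have key : (nhds (0:ℝ)) = (nhdsWithin 0 (Set.Iio 0) ⊔ nhdsWithin 0 (Set.Ioi 0)) ⊔ pure 0 := by
    rw [nhdsLT_sup_nhdsGT, nhdsNE_sup_pure]
  rw [key, tendsto_sup, tendsto_sup]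
  exact ⟨⟨h1, hx⟩, h3⟩

/-- Full continuity of the orbit map. -/
lemma continuous_orbit {x : E} (hx : SCa U x) : Continuous (fun t : ℝ => U t x) := by
  rw [continuous_iff_continuousAt]
  intro t
  have : (fun s : ℝ => U s x) = (fun h : ℝ => U t (U h x)) ∘ (fun s => s - t) := by
    funext s
    simp [hU.compm, add_sub_cancel]
  rw [ContinuousAt, this]
  apply Tendsto.comp
  · exact ((hU.clm t).continuous.tendsto x).comp (hU.tendsto_nhds_zero hx)
  · have h4 : Tendsto (fun s : ℝ => s - t) (nhds t) (nhds (t - t)) :=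
      (continuous_id.sub continuous_const).tendsto t
    rwa [sub_self] at h4

lemma sca_zero : SCa U (0 : E) := by
  have : ∀ h : ℝ, U h (0:E) = 0 := fun h => hU.map_zero_vec h
  simp only [SCa, this]
  exact tendsto_const_nhds

lemma sca_add {x y : E} (hx : SCa U x) (hy : SCa U y) : SCa U (x + y) := by
  have : ∀ h : ℝ, U h (x + y) = U h x + U h y := fun h => hU.addm h x y
  simp only [SCa, this]
  exact hx.add hy

lemma sca_smul {x : E} (c : ℂ) (hx : SCa U x) : SCa U (c • x) := by
  have : ∀ h : ℝ, U h (c • x) = c • U h x := fun h => hU.smulm h c x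
  simp only [SCa, this]
  exact hx.const_smul c

lemma sca_sub {x y : E} (hx : SCa U x) (hy : SCa U y) : SCa U (x - y) := by
  have : ∀ h : ℝ, U h (x - y) = U h x - U h y := fun h => hU.map_sub h x y
  simp only [SCa, this]
  exact hx.sub hy

lemma sca_umem {x : E} (s : ℝ) (hx : SCa U x) : SCa U (U s x) := by
  have : ∀ h : ℝ, U h (U s x) = U s (U h x) := by
    intro h
    rw [hU.compm, hU.compm, add_comm]
  simp only [SCa, this]
  exact ((hU.clm s).continuous.tendsto x).comp hx

/-- `SCa` is closed under limits along any nontrivial filter. -/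
lemma sca_lim {ι : Type*} {l : Filter ι} [l.NeBot] {f : ι → E} {v : E}
    (hf : ∀ i, SCa U (f i)) (hlim : Tendsto f l (nhds v)) : SCa U v := by
  rw [SCa, Metric.tendsto_nhds]
  intro ε hε
  obtain ⟨i, hi⟩ := (hlim.eventually (Metric.ball_mem_nhds v (by positivity : (0:ℝ) < ε/3))).exists
  have hfi := hf i
  rw [SCa, Metric.tendsto_nhds] at hfi
  filter_upwards [hfi (ε/3) (by positivity)] with h hh
  have hd : dist (U h v) v ≤ dist (U h v) (U h (f i)) + dist (U h (f i)) (f i) + dist (f i) v :=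
    dist_triangle4 _ _ _ _
  have h1 : dist (U h v) (U h (f i)) = dist v (f i) := by
    rw [dist_eq_norm, dist_eq_norm, ← hU.map_sub, hU.norm_map]
  rw [h1] at hd
  have h2 : dist v (f i) < ε/3 := by rw [dist_comm]; exact Metric.mem_ball.mp hi
  have h3 : dist (f i) v < ε/3 := Metric.mem_ball.mp hi
  calc dist (U h v) v ≤ dist v (f i) + dist (U h (f i)) (f i) + dist (f i) v := hd
    _ < ε/3 + ε/3 + ε/3 := by gcongr
    _ = ε := by ring

/-- The quotient at parameter `h`. -/

lemma hqa_sca {x v : E} (hq : HQa U x v) : SCa U x := by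
  have key : Tendsto (fun h : ℝ => U h x - x) (nhdsWithin 0 (Set.Ioi 0)) (nhds 0) := by
    have h1 : Tendsto (fun h : ℝ => ((h:ℝ) : ℂ) • (((h : ℂ))⁻¹ • (U h x - x)))
        (nhdsWithin 0 (Set.Ioi 0)) (nhds 0) := by
      have hc : Tendsto (fun h : ℝ => ((h:ℝ) : ℂ)) (nhdsWithin 0 (Set.Ioi 0)) (nhds 0) := by
        have := (Complex.continuous_ofReal.tendsto 0).mono_left
          (nhdsWithin_le_nhds (s := Set.Ioi (0:ℝ)))
        simpa using this
      simpa using hc.smul hq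
    apply h1.congr'
    filter_upwards [self_mem_nhdsWithin] with h hh
    have : (h : ℂ) ≠ 0 := by
      simpa using (ne_of_gt (Set.mem_Ioi.mp hh))
    rw [smul_smul, mul_inv_cancel₀ this, one_smul]
  rw [SCa]
  have := key.add (tendsto_const_nhds (x := x))
  simpa using this

lemma hqa_umem {x v : E} (s : ℝ) (hq : HQa U x v) : HQa U (U s x) (U s v) := by
  rw [HQa]
  have heq : ∀ h : ℝ, ((h:ℂ))⁻¹ • (U h (U s x) - U s x) = U s (((h:ℂ))⁻¹ • (U h x - x)) := by
    intro h
    rw [hU.smulm, hU.map_sub]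
    congr 2
    rw [hU.compm, hU.compm, add_comm]
  simp only [heq]
  exact ((hU.clm s).continuous.tendsto v).comp hq

lemma hqa_smul {x v : E} (c : ℂ) (hq : HQa U x v) : HQa U (c • x) (c • v) := by
  rw [HQa]
  have heq : ∀ h : ℝ, ((h:ℂ))⁻¹ • (U h (c • x) - c • x) = c • (((h:ℂ))⁻¹ • (U h x - x)) := by
    intro h
    rw [hU.smulm, ← smul_sub, smul_comm]
  simp only [heq]
  exact hq.const_smul c

lemma hqa_sca_deriv {x v : E} (hq : HQa U x v) : SCa U v := by
  have hx : SCa U x := hU.hqa_sca hq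
  apply hU.sca_lim (l := nhdsWithin (0:ℝ) (Set.Ioi 0))
    (f := fun h : ℝ => ((h:ℂ))⁻¹ • (U h x - x)) _ hq
  intro h
  exact hU.sca_smul _ (hU.sca_sub (hU.sca_umem h hx) hx)

 end UGroup

lemma tendsto_neg_Iio_Ioi : Tendsto (fun h : ℝ => -h) (nhdsWithin 0 (Set.Iio 0))
    (nhdsWithin 0 (Set.Ioi 0)) := by
  apply tendsto_nhdsWithin_of_tendsto_nhds_of_eventually_within
  · simpa using (continuous_neg.tendsto (0:ℝ)).mono_left nhdsWithin_le_nhds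
  · filter_upwards [self_mem_nhdsWithin] with h hh
    exact Set.mem_Ioi.2 (by simpa using hh)

lemma tendsto_neg_Ioi_Iio : Tendsto (fun h : ℝ => -h) (nhdsWithin 0 (Set.Ioi 0))
    (nhdsWithin 0 (Set.Iio 0)) := by
  apply tendsto_nhdsWithin_of_tendsto_nhds_of_eventually_within
  · simpa using (continuous_neg.tendsto (0:ℝ)).mono_left nhdsWithin_le_nhds
  · filter_upwards [self_mem_nhdsWithin] with h hh
    exact Set.mem_Iio.2 (by simpa using hh)

namespace UGroup

variable {U : ℝ → E → E} (hU : UGroup U)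
include hU

/-- Two-sided convergence of difference quotients. -/
lemma hqa_two_sided {x v : E} (hq : HQa U x v) :
    Tendsto (fun h : ℝ => ((h : ℂ))⁻¹ • (U h x - x)) (nhdsWithin 0 {(0:ℝ)}ᶜ) (nhds v) := by
  have hv : SCa U v := hU.hqa_sca_deriv hq
  have hvc : Tendsto (fun h : ℝ => U h v) (nhds 0) (nhds v) := hU.tendsto_nhds_zero hv
  rw [← nhdsLT_sup_nhdsGT (0:ℝ), tendsto_sup]
  refine ⟨?_, hq⟩
  set q : ℝ → E := fun h => ((h : ℂ))⁻¹ • (U h x - x) with hqdef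
  have key : ∀ h : ℝ, q h = U h (q (-h)) := by
    intro h
    have : U h (q (-h)) = (((-h : ℝ) : ℂ))⁻¹ • (x - U h x) := by
      rw [hqdef]
      simp only
      rw [hU.smulm, hU.map_sub, hU.inv_cancel']
    rw [this, hqdef]
    simp only
    rw [Complex.ofReal_neg, inv_neg, neg_smul, ← smul_neg, neg_sub]
  have hb : Tendsto (fun h : ℝ => ‖q h - v‖) (nhdsWithin 0 (Set.Iio 0)) (nhds 0) := by
    apply squeeze_zero (fun h => norm_nonneg _)
      (g := fun h : ℝ => ‖q (-h) - v‖ + ‖U h v - v‖)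
    · intro h
      calc ‖q h - v‖ = ‖U h (q (-h)) - v‖ := by rw [← key]
        _ ≤ ‖U h (q (-h)) - U h v‖ + ‖U h v - v‖ := norm_sub_le_norm_sub_add_norm_sub _ _ _
        _ = ‖q (-h) - v‖ + ‖U h v - v‖ := by rw [← hU.map_sub, hU.norm_map]
    · have t1 : Tendsto (fun h : ℝ => ‖q (-h) - v‖) (nhdsWithin 0 (Set.Iio 0)) (nhds 0) :=
        (tendsto_iff_norm_sub_tendsto_zero.mp hq).comp tendsto_neg_Iio_Ioi
      have t2 : Tendsto (fun h : ℝ => ‖U h v - v‖) (nhdsWithin 0 (Set.Iio 0)) (nhds 0) := by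
        have := (tendsto_iff_norm_sub_tendsto_zero.mp hvc).mono_left
          (nhdsWithin_le_nhds (s := Set.Iio (0:ℝ)))
        exact this
      simpa using t1.add t2
  rw [tendsto_iff_norm_sub_tendsto_zero]
  exact hb

/-- The orbit of an `HQa` element is differentiable everywhere. -/
lemma hasDerivAt_orbit {x v : E} (hq : HQa U x v) (t : ℝ) :
    HasDerivAt (fun s : ℝ => U s x) (U t v) t := by
  rw [hasDerivAt_iff_tendsto_slope_zero]
  have heq : ∀ h : ℝ, h⁻¹ • (U (t + h) x - U t x) = U t (((h : ℂ))⁻¹ • (U h x - x)) := by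
    intro h
    rw [hU.smulm, hU.map_sub, hU.compm]
    rw [← Complex.coe_smul]
    push_cast
    rfl
  simp only [heq]
  exact ((hU.clm t).continuous.tendsto v).comp (hU.hqa_two_sided hq)


lemma sca_primitive {y : E} (hy : SCa U y) (a : ℝ) :
    SCa U (∫ t in (0:ℝ)..a, U t y) := by
  have hcont := hU.continuous_orbit hy
  rw [SCa, tendsto_iff_norm_sub_tendsto_zero]
  apply squeeze_zero (fun s => norm_nonneg _) (g := fun s : ℝ => ‖U s y - y‖ * |a - 0|)
  · intro s
    have hcomm : U s (∫ t in (0:ℝ)..a, U t y) = ∫ t in (0:ℝ)..a, U s (U t y) :=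
      ((hU.clm s).intervalIntegral_comp_comm (hcont.intervalIntegrable _ _)).symm
    have hi1 : IntervalIntegrable (fun t : ℝ => U s (U t y)) MeasureTheory.volume 0 a :=
      ((hU.clm s).continuous.comp hcont).intervalIntegrable _ _
    rw [hcomm, ← intervalIntegral.integral_sub hi1 (hcont.intervalIntegrable _ _)]
    apply intervalIntegral.norm_integral_le_of_norm_le_const
    intro t _
    have : U s (U t y) - U t y = U t (U s y - y) := by
      rw [hU.map_sub]
      congr 1
      rw [hU.compm, hU.compm, add_comm]
    rw [this, hU.norm_map]
  · have h1 : Tendsto (fun s : ℝ => ‖U s y - y‖) (nhdsWithin 0 (Set.Ioi 0)) (nhds 0) :=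
      tendsto_iff_norm_sub_tendsto_zero.mp hy
    simpa using h1.mul_const |a - 0|

lemma hasDerivAt_primitive {y : E} (hy : SCa U y) (a : ℝ) :
    HasDerivAt (fun b => ∫ t in (0:ℝ)..b, U t y) (U a y) a :=
  intervalIntegral.integral_hasDerivAt_right
    ((hU.continuous_orbit hy).intervalIntegrable _ _)
    ((hU.continuous_orbit hy).stronglyMeasurableAtFilter _ _)
    (hU.continuous_orbit hy).continuousAt

lemma slope_primitive_zero {y : E} (hy : SCa U y) :
    Tendsto (fun h : ℝ => ((h:ℂ))⁻¹ • ∫ t in (0:ℝ)..h, U t y)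
      (nhdsWithin 0 (Set.Ioi 0)) (nhds y) := by
  have hd := hU.hasDerivAt_primitive hy 0
  have hs := hasDerivAt_iff_tendsto_slope_zero.mp hd
  have hmono : nhdsWithin (0:ℝ) (Set.Ioi 0) ≤ nhdsWithin (0:ℝ) {(0:ℝ)}ᶜ :=
    nhdsWithin_mono 0 (fun t ht => ne_of_gt (Set.mem_Ioi.mp ht))
  have := hs.mono_left hmono
  rw [hU.zerom] at this
  apply this.congr
  intro h
  rw [zero_add, intervalIntegral.integral_same, sub_zero, ← Complex.coe_smul,
    Complex.ofReal_inv]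

lemma hqa_mollify {y : E} (hy : SCa U y) {ε : ℝ} (hε : 0 < ε) :
    HQa U ((ε:ℂ)⁻¹ • ∫ t in (0:ℝ)..ε, U t y) ((ε:ℂ)⁻¹ • (U ε y - y)) := by
  have hcont := hU.continuous_orbit hy
  have base : HQa U (∫ t in (0:ℝ)..ε, U t y) (U ε y - y) := by
    set P : ℝ → E := fun b => ∫ t in (0:ℝ)..b, U t y with hP
    have key : ∀ h : ℝ, ((h:ℂ))⁻¹ • (U h (P ε) - P ε)
        = h⁻¹ • (P (ε + h) - P ε) - h⁻¹ • (P (0 + h) - P 0) := by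
      intro h
      have hUP : U h (P ε) = P (ε + h) - P h := by
        have e1 : U h (P ε) = ∫ t in (0:ℝ)..ε, U h (U t y) :=
          ((hU.clm h).intervalIntegral_comp_comm (hcont.intervalIntegrable _ _)).symm
        have e2 : ∀ t : ℝ, U h (U t y) = U (t + h) y := fun t => by
          rw [hU.compm, add_comm]
        rw [e1]
        simp_rw [e2]
        rw [intervalIntegral.integral_comp_add_right (fun t => U t y)]
        rw [hP]
        simp only [zero_add]
        rw [← intervalIntegral.integral_interval_sub_left
          (hcont.intervalIntegrable _ _) (hcont.intervalIntegrable _ _)]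
      have crw : ∀ (r : ℝ) (u : E), ((r:ℂ))⁻¹ • u = r⁻¹ • u := by
        intro r u; rw [← Complex.ofReal_inv, Complex.coe_smul]
      rw [hUP, hP]
      simp only [zero_add, intervalIntegral.integral_same, sub_zero, crw]
      rw [show (∫ t in (0:ℝ)..ε + h, U t y) - (∫ t in (0:ℝ)..h, U t y)
            - (∫ t in (0:ℝ)..ε, U t y)
          = ((∫ t in (0:ℝ)..ε + h, U t y) - (∫ t in (0:ℝ)..ε, U t y))
            - (∫ t in (0:ℝ)..h, U t y) from by abel, smul_sub]
    rw [HQa]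
    refine Tendsto.congr (fun h => (key h).symm) ?_
    have hmono : nhdsWithin (0:ℝ) (Set.Ioi 0) ≤ nhdsWithin (0:ℝ) {(0:ℝ)}ᶜ :=
      nhdsWithin_mono 0 (fun t ht => ne_of_gt (Set.mem_Ioi.mp ht))
    have T1 := (hasDerivAt_iff_tendsto_slope_zero.mp
      (hU.hasDerivAt_primitive hy ε)).mono_left hmono
    have T2 := (hasDerivAt_iff_tendsto_slope_zero.mp
      (hU.hasDerivAt_primitive hy 0)).mono_left hmono
    rw [hU.zerom] at T2
    exact T1.sub T2
  have := hU.hqa_smul ((ε:ℂ)⁻¹) base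
  exact this

/-- Main part 1. -/
theorem main_part1 {x v : E} (hq : HQa U x v) : SCa U x ∧ SCa U ((-Complex.I) • v) :=
  ⟨hU.hqa_sca hq, hU.sca_smul _ (hU.hqa_sca_deriv hq)⟩

lemma inner_U_shift (h : ℝ) (x y : E) : (inner ℂ (U h x) y : ℂ) = inner ℂ x (U (-h) y) := by
  rw [← hU.innerm (-h) (U h x) y, hU.inv_cancel]

/-- Main part 2: symmetry. -/
theorem main_part2 {x₁ v₁ x₂ v₂ : E} (h1 : HQa U x₁ v₁) (h2 : HQa U x₂ v₂) :
    (inner ℂ ((-Complex.I) • v₁) x₂ : ℂ) = inner ℂ x₁ ((-Complex.I) • v₂) := by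
  have key : (inner ℂ v₁ x₂ : ℂ) = - inner ℂ x₁ v₂ := by
    have A : Tendsto (fun h : ℝ => (inner ℂ (((h:ℂ))⁻¹ • (U h x₁ - x₁)) x₂ : ℂ))
        (nhdsWithin 0 (Set.Ioi 0)) (nhds (inner ℂ v₁ x₂)) :=
      h1.inner tendsto_const_nhds
    have hB : ∀ h : ℝ, (inner ℂ (((h:ℂ))⁻¹ • (U h x₁ - x₁)) x₂ : ℂ)
        = inner ℂ x₁ (-(((((-h):ℝ)):ℂ)⁻¹ • (U (-h) x₂ - x₂))) := by
      intro h
      rw [inner_smul_left, inner_sub_left, hU.inner_U_shift, map_inv₀, Complex.conj_ofReal,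
        inner_neg_right, inner_smul_right]
      rw [Complex.ofReal_neg, inv_neg, neg_mul, neg_neg, inner_sub_right, mul_sub]
    have C : Tendsto (fun h : ℝ => (inner ℂ x₁
        (-(((((-h):ℝ)):ℂ)⁻¹ • (U (-h) x₂ - x₂))) : ℂ))
        (nhdsWithin 0 (Set.Ioi 0)) (nhds (inner ℂ x₁ (-v₂))) := by
      have hmono : nhdsWithin (0:ℝ) (Set.Iio 0) ≤ nhdsWithin (0:ℝ) {(0:ℝ)}ᶜ :=
        nhdsWithin_mono 0 (fun t ht => ne_of_lt (Set.mem_Iio.mp ht))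
      have hq2 : Tendsto (fun h : ℝ => ((((-h):ℝ):ℂ))⁻¹ • (U (-h) x₂ - x₂))
          (nhdsWithin 0 (Set.Ioi 0)) (nhds v₂) :=
        ((hU.hqa_two_sided h2).mono_left hmono).comp tendsto_neg_Ioi_Iio
      exact Tendsto.inner tendsto_const_nhds hq2.neg
    have := tendsto_nhds_unique (A.congr hB) C
    rw [inner_neg_right] at this
    exact this
  rw [inner_smul_left, inner_smul_right, key]
  simp only [Complex.conj_neg_I]
  ring

/-- Main part 3: essential self-adjointness / adjoint included in graph. -/
theorem main_part3 {w z : E} (hw : SCa U w) (hz : SCa U z)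
    (hyp : ∀ x v, HQa U x v → (inner ℂ ((-Complex.I) • v) w : ℂ) = inner ℂ x z) :
    HQa U w (Complex.I • z) := by
  have hcontz := hU.continuous_orbit hz
  set Q : ℝ → E := fun b => ∫ t in (0:ℝ)..b, U t z with hQdef
  have key : ∀ h : ℝ, U h w - w = Complex.I • Q h := by
    intro h
    set Δ : E := U h w - w - Complex.I • Q h with hΔ
    have hpair : ∀ x v, HQa U x v → (inner ℂ x Δ : ℂ) = 0 := by
      intro x v hxv
      have hcontx := hU.continuous_orbit (hU.hqa_sca hxv)
      -- the basic relation from the adjoint hypothesis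
      have R : ∀ t : ℝ, (inner ℂ (U (-t) v) w : ℂ) = -Complex.I * inner ℂ (U (-t) x) z := by
        intro t
        have := hyp _ _ (hU.hqa_umem (-t) hxv)
        rw [inner_smul_left] at this
        simp only [Complex.conj_neg_I] at this
        -- this : I * ⟪U(-t)v, w⟫ = ⟪U(-t)x, z⟫
        have h2 := congrArg (fun c => -Complex.I * c) this
        rw [← mul_assoc] at h2
        simp only [neg_mul, Complex.I_mul_I, neg_neg, one_mul] at h2
        rw [h2]
        ring
      -- differentiability of t ↦ ⟪U (-t) x, w⟫
      have hg : ∀ t : ℝ, HasDerivAt (fun s : ℝ => U (-s) x) (-(U (-t) v)) t := by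
        intro t
        have hφ : HasDerivAt (fun s : ℝ => U s x) (U (-t) v) (-t) :=
          hU.hasDerivAt_orbit hxv (-t)
        have hψ : HasDerivAt (fun s : ℝ => -s) (-1 : ℝ) t := hasDerivAt_neg t
        have := hφ.scomp t hψ
        simpa [Function.comp_def] using this
      set F : ℝ → ℂ := fun t => (inner ℂ (U (-t) x) w : ℂ) with hF
      have hFd : ∀ t : ℝ, HasDerivAt F (Complex.I * inner ℂ (U (-t) x) z) t := by
        intro t
        have L := ((innerSL ℂ w).restrictScalars ℝ)
        have step1 : HasDerivAt (fun s : ℝ => (inner ℂ w (U (-s) x) : ℂ))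
            ((inner ℂ w (-(U (-t) v)) : ℂ)) t :=
          (((innerSL ℂ w).restrictScalars ℝ).hasFDerivAt).comp_hasDerivAt t (hg t)
        have step2 : HasDerivAt (fun s : ℝ => (starRingEnd ℂ) (inner ℂ w (U (-s) x) : ℂ))
            ((starRingEnd ℂ) ((inner ℂ w (-(U (-t) v)) : ℂ))) t :=
          (Complex.conjCLE.toContinuousLinearMap.hasFDerivAt).comp_hasDerivAt t step1
        have e1 : (fun s : ℝ => (starRingEnd ℂ) (inner ℂ w (U (-s) x) : ℂ)) = F := by
          funext s
          rw [hF, inner_conj_symm]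
        have e2 : (starRingEnd ℂ) ((inner ℂ w (-(U (-t) v)) : ℂ))
            = Complex.I * inner ℂ (U (-t) x) z := by
          rw [inner_conj_symm, inner_neg_left, R t]
          ring
        rw [e1, e2] at step2
        exact step2
      -- FTC
      have hφcont : Continuous (fun t : ℝ => Complex.I * (inner ℂ (U (-t) x) z : ℂ)) := by
        apply continuous_const.mul
        exact Continuous.inner (hcontx.comp continuous_neg) continuous_const
      have hFTC : ∫ t in (0:ℝ)..h, Complex.I * (inner ℂ (U (-t) x) z : ℂ) = F h - F 0 :=
        intervalIntegral.integral_eq_sub_of_hasDerivAt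
          (fun t _ => hFd t) (hφcont.intervalIntegrable _ _)
      -- rewrite both sides
      have lhs1 : ∫ t in (0:ℝ)..h, Complex.I * (inner ℂ (U (-t) x) z : ℂ)
          = Complex.I * (inner ℂ x (Q h) : ℂ) := by
        rw [intervalIntegral.integral_const_mul]
        congr 1
        have e3 : (fun t : ℝ => (inner ℂ (U (-t) x) z : ℂ)) = fun t => (inner ℂ x (U t z) : ℂ) := by
          funext t
          rw [hU.inner_U_shift (-t) x z, neg_neg]
        rw [e3]
        exact ((innerSL ℂ x).intervalIntegral_comp_comm (hcontz.intervalIntegrable _ _))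
      have hF0 : F 0 = (inner ℂ x w : ℂ) := by
        rw [hF]
        simp only
        rw [neg_zero, hU.zerom]
      have hFh : F h = (inner ℂ x (U h w) : ℂ) := by
        rw [hF]
        simp only
        rw [hU.inner_U_shift (-h) x w, neg_neg]
      have final : (inner ℂ x (U h w) : ℂ) - inner ℂ x w = Complex.I * inner ℂ x (Q h) := by
        rw [← hFh, ← hF0, ← hFTC, lhs1]
      rw [hΔ, inner_sub_right, inner_sub_right, inner_smul_right, final]
      ring
    have hΔSC : SCa U Δ := by
      apply hU.sca_sub (hU.sca_sub (hU.sca_umem h hw) hw)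
      exact hU.sca_smul _ (hU.sca_primitive hz h)
    have hΔ0 : Δ = 0 := by
      have hm : ∀ᶠ (ε : ℝ) in nhdsWithin (0:ℝ) (Set.Ioi 0),
          (inner ℂ (((ε : ℝ) : ℂ)⁻¹ • ∫ t in (0:ℝ)..ε, U t Δ) Δ : ℂ) = 0 := by
        filter_upwards [self_mem_nhdsWithin] with ε hε
        exact hpair _ _ (hU.hqa_mollify hΔSC (Set.mem_Ioi.mp hε))
      have hlim : Tendsto (fun ε : ℝ => (inner ℂ (((ε : ℝ) : ℂ)⁻¹ • ∫ t in (0:ℝ)..ε, U t Δ) Δ : ℂ))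
          (nhdsWithin (0:ℝ) (Set.Ioi 0)) (nhds (inner ℂ Δ Δ)) :=
        (hU.slope_primitive_zero hΔSC).inner tendsto_const_nhds
      have hzero : Tendsto (fun ε : ℝ =>
          (inner ℂ (((ε : ℝ) : ℂ)⁻¹ • ∫ t in (0:ℝ)..ε, U t Δ) Δ : ℂ))
          (nhdsWithin (0:ℝ) (Set.Ioi 0)) (nhds 0) :=
        Tendsto.congr' (hm.mono fun ε hε => hε.symm) tendsto_const_nhds
      have h0 : (inner ℂ Δ Δ : ℂ) = 0 := tendsto_nhds_unique hlim hzero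
      exact inner_self_eq_zero.mp h0
    rw [hΔ] at hΔ0
    exact sub_eq_zero.mp hΔ0
  rw [HQa]
  have heq : ∀ h : ℝ, ((h:ℂ))⁻¹ • (U h w - w) = Complex.I • (((h:ℂ))⁻¹ • Q h) := by
    intro h
    rw [key h, smul_comm]
  simp only [heq]
  exact (hU.slope_primitive_zero hz).const_smul Complex.I

end UGroup


end UnitaryGroupAbstract

/-! ### Glue -/

noncomputable def Ushift (C : CMSpace (ℕ → ℝ)) (k : ℕ) : ℝ → HS C → HS C :=
  fun t x => cmTranslate (t • ek k) x

lemma ushift_ugroup (C : CMSpace (ℕ → ℝ)) (k : ℕ) : UGroup (Ushift C k) where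
  addm t x y := by
    show cmTranslate (t • ek k) (C.add x y)
      = (C.add (cmTranslate (t • ek k) x) (cmTranslate (t • ek k) y) : ComplexMeasure (ℕ → ℝ))
    exact CMTrans.cmTranslate_add C _ x y
  smulm t c x := by
    show cmTranslate (t • ek k) (C.smul c x)
      = (C.smul c (cmTranslate (t • ek k) x) : ComplexMeasure (ℕ → ℝ))
    exact CMTrans.cmTranslate_smul C _ c x
  innerm t x y := by
    show C.inner (cmTranslate (t • ek k) x) (cmTranslate (t • ek k) y) = C.inner x y
    exact CMTrans.cmTranslate_inner C _ x y
  compm s t x := by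
    show cmTranslate (s • ek k) (cmTranslate (t • ek k) x)
      = (cmTranslate ((s + t) • ek k) x : ComplexMeasure (ℕ → ℝ))
    exact (CMTrans.cmTranslate_comp (t • ek k) (s • ek k) x).trans
      (congrArg (fun a => cmTranslate a x) (by rw [← add_smul, add_comm t s]))
  zerom x := by
    show cmTranslate ((0:ℝ) • ek k) x = (x : ComplexMeasure (ℕ → ℝ))
    rw [zero_smul]
    exact CMTrans.cmTranslate_zero' x

lemma inL2k_iff (C : CMSpace (ℕ → ℝ)) (k : ℕ) (u : ComplexMeasure (ℕ → ℝ)) :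
    InL2k C k u ↔ SCa (Ushift C k) (u : HS C) := by
  constructor
  · intro hh
    exact tendsto_iff_norm_sub_tendsto_zero.mpr hh
  · intro hh
    exact tendsto_iff_norm_sub_tendsto_zero.mp hh

lemma hasQuotK_iff (C : CMSpace (ℕ → ℝ)) (k : ℕ) (u v : ComplexMeasure (ℕ → ℝ)) :
    HasQuotK C k u v ↔ HQa (Ushift C k) (u : HS C) (v : HS C) := by
  constructor
  · intro hh
    exact tendsto_iff_norm_sub_tendsto_zero.mpr hh
  · intro hh
    exact tendsto_iff_norm_sub_tendsto_zero.mp hh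


/-- √(−1)·∂/∂x_k, with domain H¹_k(ℝ^∞) (where ∂u/∂x_k := −v for the limit v
of the difference quotients, so that the operator sends u to (−i)·v), is a self-adjoint
operator in L²_k(ℝ^∞): it maps its domain into L²_k, it is symmetric, and every pair (w,z)
satisfying the adjoint relation already belongs to the graph. -/
theorem iPartialDeriv_selfAdjoint (C : CMSpace (ℕ → ℝ)) (k : ℕ) :
    (∀ u v, HasQuotK C k u v → InL2k C k u ∧ InL2k C k (C.smul (-Complex.I) v)) ∧
    (∀ u₁ v₁ u₂ v₂, HasQuotK C k u₁ v₁ → HasQuotK C k u₂ v₂ →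
      C.inner (C.smul (-Complex.I) v₁) u₂ = C.inner u₁ (C.smul (-Complex.I) v₂)) ∧
    (∀ w z, InL2k C k w → InL2k C k z →
      (∀ u v, HasQuotK C k u v → C.inner (C.smul (-Complex.I) v) w = C.inner u z) →
      ∃ vw, HasQuotK C k w vw ∧ C.smul (-Complex.I) vw = z) := by
  have hG : UGroup (Ushift C k) := ushift_ugroup C k
  refine ⟨?_, ?_, ?_⟩
  · intro u v huv
    have h := hG.main_part1 ((hasQuotK_iff C k u v).mp huv)
    exact ⟨(inL2k_iff C k u).mpr h.1, (inL2k_iff C k _).mpr h.2⟩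
  · intro u₁ v₁ u₂ v₂ h1 h2
    exact hG.main_part2 ((hasQuotK_iff C k u₁ v₁).mp h1) ((hasQuotK_iff C k u₂ v₂).mp h2)
  · intro w z hw hz hyp
    have hq := hG.main_part3 (w := (w : HS C)) (z := (z : HS C))
      ((inL2k_iff C k w).mp hw) ((inL2k_iff C k z).mp hz)
      (fun x v hxv => hyp x v ((hasQuotK_iff C k x v).mpr hxv))
    refine ⟨C.smul Complex.I z, ?_, ?_⟩
    · exact (hasQuotK_iff C k w (C.smul Complex.I z)).mpr hq
    rw [← C.mul_smul]
    have : -Complex.I * Complex.I = 1 := by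
      rw [neg_mul, Complex.I_mul_I, neg_neg]
    rw [this, C.one_smul]
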